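/- arXiv:1309.3980 — 5 statements merged into one kernel-verified Lean document; each statement's English description precedes it below -/
import Mathlib

section
/- Let ρ > 0 and ρ_p > 0 be real numbers and H ∈ ℝ³. Then the 8×8 block matrix A₀ = [[ρ_p/ρ, 0, -(ρ_p/ρ)Hᵀ, 0], [0, ρ I₃, 0₃, 0], [-(ρ_p/ρ)H, 0₃, I₃ + (ρ_p/ρ) H⊗H, 0], [0, 0, 0, 1]] (acting on vectors (q, v, H', S) with q, S ∈ ℝ and v, H' ∈ ℝ³) is symmetric and positive definite. -/
/-!
The substitution `q ↦ q - H ⬝ H'` diagonalizes the quadratic form of `A₀`: writing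
`P = 1 + e₀ uᵀ` with `u = (0, 0, 0, 0, -H, 0)`, one has
`A₀ = Pᵀ diag(ρ_p/ρ, ρ, ρ, ρ, 1, 1, 1, 1) P`. The diagonal factor is positive definite and the
shear `P` is invertible, so `A₀` is positive definite, hence in particular symmetric.
-/

open Matrix

/-- `vecMulVec a u` squares to `(u ⬝ᵥ a) • vecMulVec a u`, so `1 - vecMulVec a u` inverts the
shear when `u ⬝ᵥ a = 0`. -/
theorem Matrix.mulVec_injective_one_add_vecMulVec {R n : Type*} [Ring R] [Fintype n]
    [DecidableEq n] {a u : n → R} (h : u ⬝ᵥ a = 0) :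
    Function.Injective (1 + vecMulVec a u).mulVec := by
  have hinv : (1 - vecMulVec a u) * (1 + vecMulVec a u) = 1 := by
    rw [sub_mul, one_mul, mul_add, mul_one, vecMulVec_mul_vecMulVec, h, zero_smul,
      vecMulVec_zero]
    abel
  intro x y hxy
  simpa [mulVec_mulVec, hinv] using congrArg (1 - vecMulVec a u).mulVec hxy

/-- The symmetrized MHD coefficient matrix `A₀` is symmetric and positive definite
when `ρ > 0` and `ρ_p > 0`. -/
theorem stmt0 (ρ ρp : ℝ) (hρ : 0 < ρ) (hρp : 0 < ρp) (H : Fin 3 → ℝ) :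
    let r := ρp / ρ
    let A₀ : Matrix (Fin 8) (Fin 8) ℝ :=
      !![r, 0, 0, 0, -(r * H 0), -(r * H 1), -(r * H 2), 0;
         0, ρ, 0, 0, 0, 0, 0, 0;
         0, 0, ρ, 0, 0, 0, 0, 0;
         0, 0, 0, ρ, 0, 0, 0, 0;
         -(r * H 0), 0, 0, 0, 1 + r * (H 0 * H 0), r * (H 0 * H 1), r * (H 0 * H 2), 0;
         -(r * H 1), 0, 0, 0, r * (H 1 * H 0), 1 + r * (H 1 * H 1), r * (H 1 * H 2), 0;
         -(r * H 2), 0, 0, 0, r * (H 2 * H 0), r * (H 2 * H 1), 1 + r * (H 2 * H 2), 0;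
         0, 0, 0, 0, 0, 0, 0, 1]
    A₀.IsSymm ∧ A₀.PosDef := by
  intro r A₀
  set P : Matrix (Fin 8) (Fin 8) ℝ :=
    1 + vecMulVec (Pi.single 0 1) ![0, 0, 0, 0, -H 0, -H 1, -H 2, 0]
  have hfactor : A₀ = Pᴴ * diagonal ![r, ρ, ρ, ρ, 1, 1, 1, 1] * P := by
    ext i j
    fin_cases i <;> fin_cases j <;>
      simp [A₀, P, mul_apply, Fin.sum_univ_eight, one_apply, Pi.single_apply] <;> ring
  have hpos : A₀.PosDef := by
    rw [hfactor]
    refine (PosDef.diagonal fun i => ?_).conjTranspose_mul_mul_same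
      (mulVec_injective_one_add_vecMulVec (by simp [dotProduct, Fin.sum_univ_eight]))
    fin_cases i <;> simp [r, div_pos hρp hρ, hρ]
  exact ⟨isHermitian_iff_isSymm.mp hpos.isHermitian, hpos⟩
end

section
/- Let ν = (ν₁, ν₂, ν₃) ∈ ℝ³ and define the 6×6 matrix 𝔅₀ by 𝔅₀ = [[I₃, C(ν)ᵀ],[C(ν), I₃]], where C(ν) is the matrix of the cross product with ν, i.e. C(ν)x = ν × x (explicitly 𝔅₀ = [[1,0,0,0,ν₃,-ν₂],[0,1,0,-ν₃,0,ν₁],[0,0,1,ν₂,-ν₁,0],[0,-ν₃,ν₂,1,0,0],[ν₃,0,-ν₁,0,1,0],[-ν₂,ν₁,0,0,0,1]]). Then 𝔅₀ is symmetric, and 𝔅₀ is positive definite if and only if |ν| < 1. -/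
/-!
Write `x = (u, w) ∈ ℝ³ × ℝ³`. The quadratic form of `𝔅₀` is `|u|² + |w|² - 2 u · (ν × w)`.
Since `|u · (ν × w)| ≤ |ν| |u| |w| ≤ |ν| (|u|² + |w|²) / 2`, it is positive for `x ≠ 0` when
`|ν| < 1`. Conversely, for `w ≠ 0` orthogonal to `ν` and `u = ν × w` the form equals
`(1 - |ν|²) |w|²`, which is not positive when `|ν| ≥ 1`.
-/

open Matrix

def symmetrizer (ν : Fin 3 → ℝ) : Matrix (Fin 6) (Fin 6) ℝ :=
  !![1, 0, 0, 0, ν 2, -ν 1;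
     0, 1, 0, -ν 2, 0, ν 0;
     0, 0, 1, ν 1, -ν 0, 0;
     0, -ν 2, ν 1, 1, 0, 0;
     ν 2, 0, -ν 0, 0, 1, 0;
     -ν 1, ν 0, 0, 0, 0, 1]

lemma isSymm_symmetrizer (ν : Fin 3 → ℝ) : (symmetrizer ν).IsSymm := by
  ext i j
  fin_cases i <;> fin_cases j <;> rfl

lemma append_dotProduct_symmetrizer_mulVec_append (ν u w : Fin 3 → ℝ) :
    Fin.append u w ⬝ᵥ symmetrizer ν *ᵥ Fin.append u w =
      u ⬝ᵥ u + w ⬝ᵥ w - 2 * (u ⬝ᵥ ν ⨯₃ w) := by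
  have happend : Fin.append u w = ![u 0, u 1, u 2, w 0, w 1, w 2] := by
    ext i
    fin_cases i <;> rfl
  rw [happend]
  simp only [symmetrizer, dotProduct, mulVec, Nat.reduceAdd, Fin.sum_univ_six, Fin.sum_univ_three,
    cross_apply, of_apply, cons_val]
  ring

lemma dotProduct_self_nonneg {n : Type*} [Fintype n] (v : n → ℝ) : 0 ≤ v ⬝ᵥ v := by
  simpa using dotProduct_star_self_nonneg v

lemma append_dotProduct_append {m n : ℕ} (u u' : Fin m → ℝ) (w w' : Fin n → ℝ) :
    Fin.append u w ⬝ᵥ Fin.append u' w' = u ⬝ᵥ u' + w ⬝ᵥ w' := by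
  simp [dotProduct, Fin.sum_univ_add]

lemma dotProduct_sq_le {n : Type*} [Fintype n] (u v : n → ℝ) :
    (u ⬝ᵥ v) ^ 2 ≤ (u ⬝ᵥ u) * (v ⬝ᵥ v) := by
  simpa only [dotProduct, ← pow_two] using Finset.univ.sum_mul_sq_le_sq_mul_sq u v

lemma dotProduct_cross_sq_le (u ν w : Fin 3 → ℝ) :
    (u ⬝ᵥ ν ⨯₃ w) ^ 2 ≤ (ν ⬝ᵥ ν) * ((u ⬝ᵥ u) * (w ⬝ᵥ w)) := by
  have hcross : ν ⨯₃ w ⬝ᵥ ν ⨯₃ w ≤ (ν ⬝ᵥ ν) * (w ⬝ᵥ w) := by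
    rw [cross_dot_cross, dotProduct_comm w ν]
    nlinarith [sq_nonneg (ν ⬝ᵥ w)]
  calc (u ⬝ᵥ ν ⨯₃ w) ^ 2 ≤ (u ⬝ᵥ u) * (ν ⨯₃ w ⬝ᵥ ν ⨯₃ w) := dotProduct_sq_le _ _
    _ ≤ (u ⬝ᵥ u) * ((ν ⬝ᵥ ν) * (w ⬝ᵥ w)) := by gcongr; exact dotProduct_self_nonneg u
    _ = (ν ⬝ᵥ ν) * ((u ⬝ᵥ u) * (w ⬝ᵥ w)) := by ring

lemma two_mul_lt_add_of_sq_le {a b d s : ℝ} (hab : 0 < a + b) (hs₀ : 0 ≤ s) (hs : s < 1)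
    (hd : d ^ 2 ≤ s * (a * b)) : 2 * d < a + b := by
  have hsq : (2 * d) ^ 2 < (a + b) ^ 2 := by
    nlinarith [mul_le_mul_of_nonneg_left (four_mul_le_sq_add a b) hs₀,
      mul_lt_mul_of_pos_right hs (pow_pos hab 2)]
  exact lt_of_pow_lt_pow_left₀ 2 hab.le hsq

lemma posDef_symmetrizer_iff (ν : Fin 3 → ℝ) : (symmetrizer ν).PosDef ↔ ν ⬝ᵥ ν < 1 := by
  refine ⟨fun hpos => ?_, fun hν => ?_⟩
  · by_contra! hν
    obtain ⟨w, hw, hwν⟩ := exists_ne_zero_dotProduct_eq_zero ν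
    have hx : Fin.append (ν ⨯₃ w) w ≠ 0 := fun h =>
      hw (funext fun i => (Fin.append_right _ w i).symm.trans (congrFun h _))
    have hQ := hpos.dotProduct_mulVec_pos hx
    rw [star_trivial, append_dotProduct_symmetrizer_mulVec_append, cross_dot_cross,
      dotProduct_comm ν w, hwν] at hQ
    nlinarith [dotProduct_self_nonneg w]
  · refine .of_dotProduct_mulVec_pos (isHermitian_iff_isSymm.2 (isSymm_symmetrizer ν))
      fun x hx => ?_
    obtain ⟨u, w, rfl⟩ : ∃ u w : Fin 3 → ℝ, x = Fin.append u w :=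
      ⟨_, _, (Fin.append_castAdd_natAdd (m := 3) (n := 3) (f := x)).symm⟩
    have huw : 0 < u ⬝ᵥ u + w ⬝ᵥ w := by
      rw [← append_dotProduct_append]
      exact (dotProduct_self_nonneg _).lt_of_ne' (dotProduct_self_eq_zero.not.2 hx)
    have hcross := two_mul_lt_add_of_sq_le huw (dotProduct_self_nonneg ν) hν
      (dotProduct_cross_sq_le u ν w)
    rw [star_trivial, append_dotProduct_symmetrizer_mulVec_append]
    linarith

/-- The secondary symmetrizer `𝔅₀` is symmetric, and positive definite iff `|ν| < 1`. -/
theorem stmt5 (ν₁ ν₂ ν₃ : ℝ) :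
    let B₀ : Matrix (Fin 6) (Fin 6) ℝ :=
      !![1, 0, 0, 0, ν₃, -ν₂;
         0, 1, 0, -ν₃, 0, ν₁;
         0, 0, 1, ν₂, -ν₁, 0;
         0, -ν₃, ν₂, 1, 0, 0;
         ν₃, 0, -ν₁, 0, 1, 0;
         -ν₂, ν₁, 0, 0, 0, 1]
    B₀.IsSymm ∧ (B₀.PosDef ↔ Real.sqrt (ν₁^2 + ν₂^2 + ν₃^2) < 1) := by
  have hnorm : ν₁ ^ 2 + ν₂ ^ 2 + ν₃ ^ 2 = ![ν₁, ν₂, ν₃] ⬝ᵥ ![ν₁, ν₂, ν₃] := by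
    simp [dotProduct, Fin.sum_univ_three, sq]
  rw [hnorm, Real.sqrt_lt' one_pos, one_pow]
  exact ⟨isSymm_symmetrizer ![ν₁, ν₂, ν₃], posDef_symmetrizer_iff ![ν₁, ν₂, ν₃]⟩
end

section
/- Let Ψ₁, Ψ₂, Ψ₃, Ψ_t ∈ ℝ with 1+Ψ₁ > 0 and ε²Ψ_t² < 1, set |N̂|² = 1+Ψ₂²+Ψ₃². Then the cubic polynomial p(τ) = τ³ - (|N̂|² + 2(1+Ψ₁)² - ε²Ψ_t²)τ² + (1+Ψ₁)²(1-ε²Ψ_t²)(|N̂|²+(1+Ψ₁)²+1)τ - (1+Ψ₁)⁴(1-ε²Ψ_t²)² has all of its real roots positive; consequently any real symmetric matrix whose characteristic polynomial is p(τ)² is positive definite. -/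
open Matrix Polynomial

/-! The coefficients of `p` alternate in sign and its constant term is nonzero, so every term of
`p(τ)` is `≤ 0` for `τ ≤ 0` and the last one is `< 0`: real roots are positive. The eigenvalues of a
symmetric matrix are real roots of its characteristic polynomial, and the roots of `p²` are those of
`p`, so the matrix has positive spectrum. -/

theorem Polynomial.pos_of_isRoot_cubic {K : Type*} [Field K] [LinearOrder K] [IsStrictOrderedRing K]
    {a b c τ : K} (ha : 0 ≤ a) (hb : 0 ≤ b) (hc : 0 < c)
    (hτ : (X ^ 3 - C a * X ^ 2 + C b * X - C c).IsRoot τ) : 0 < τ := by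
  simp only [IsRoot, eval_sub, eval_add, eval_mul, eval_pow, eval_C, eval_X] at hτ
  by_contra! hτ_nonpos
  nlinarith [mul_nonneg ha (sq_nonneg τ), mul_nonpos_of_nonneg_of_nonpos hb hτ_nonpos,
    pow_two_nonneg τ, mul_nonpos_of_nonneg_of_nonpos (sq_nonneg τ) hτ_nonpos]

open scoped ComplexOrder in
theorem Matrix.IsHermitian.posDef_of_forall_isRoot_charpoly_pos {𝕜 n : Type*} [RCLike 𝕜]
    [Fintype n] [DecidableEq n] {A : Matrix n n 𝕜} (hA : A.IsHermitian)
    (h : ∀ μ : ℝ, A.charpoly.IsRoot (μ : 𝕜) → 0 < μ) : A.PosDef :=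
  hA.posDef_iff_eigenvalues_pos.mpr fun i => h _ <| by
    rw [hA.charpoly_eq, IsRoot, eval_prod]
    exact Finset.prod_eq_zero (Finset.mem_univ i) (by simp)

/-- All real roots of the cubic `p` are positive; consequently any real symmetric
matrix with characteristic polynomial `p²` is positive definite. -/
theorem stmt9 (Ψ₁ Ψ₂ Ψ₃ Ψt ε : ℝ) (h1 : 0 < 1 + Ψ₁) (h2 : ε^2 * Ψt^2 < 1) :
    let N2 : ℝ := 1 + Ψ₂^2 + Ψ₃^2
    let p : Polynomial ℝ :=
      X^3 - C (N2 + 2*(1+Ψ₁)^2 - ε^2*Ψt^2) * X^2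
        + C ((1+Ψ₁)^2 * (1-ε^2*Ψt^2) * (N2 + (1+Ψ₁)^2 + 1)) * X
        - C ((1+Ψ₁)^4 * (1-ε^2*Ψt^2)^2)
    (∀ τ : ℝ, p.IsRoot τ → 0 < τ) ∧
    (∀ M : Matrix (Fin 6) (Fin 6) ℝ, M.IsSymm → M.charpoly = p^2 → M.PosDef) := by
  intro N2 p
  have hN2 : 1 ≤ N2 := by simp only [N2]; nlinarith [sq_nonneg Ψ₂, sq_nonneg Ψ₃]
  have hε : 0 < 1 - ε^2*Ψt^2 := sub_pos.mpr h2
  have roots_pos : ∀ τ : ℝ, p.IsRoot τ → 0 < τ := fun τ =>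
    pos_of_isRoot_cubic (by nlinarith [sq_nonneg (1 + Ψ₁)]) (by positivity) (by positivity)
  refine ⟨roots_pos, fun M hM hcharpoly => ?_⟩
  refine (isHermitian_iff_isSymm.mpr hM).posDef_of_forall_isRoot_charpoly_pos fun μ hμ => ?_
  rw [hcharpoly] at hμ
  exact roots_pos μ (by simpa [IsRoot] using hμ)
end

section
/- Let ℰ, ℋ ∈ ℝ³, N = (1, -φ₂, -φ₃) with φ₂, φ₃ ∈ ℝ, ε, φ_t ∈ ℝ. Suppose the second and third components of the vector equation N × ℰ = εφ_t ℋ hold, i.e. (N×ℰ)₂ = εφ_tℋ₂ and (N×ℰ)₃ = εφ_tℋ₃, and suppose ℋ·N = 0. Then also the first component holds: (N×ℰ)₁ = εφ_t ℋ₁. -/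
/-- If the second and third components of `N × ℰ = εφ_t ℋ` hold and `ℋ·N = 0`,
then the first component also holds. -/
theorem stmt12 (ℰ ℋ : Fin 3 → ℝ) (φ₂ φ₃ φt ε : ℝ)
    (h2 : (crossProduct ![1, -φ₂, -φ₃] ℰ) 1 = ε * φt * ℋ 1)
    (h3 : (crossProduct ![1, -φ₂, -φ₃] ℰ) 2 = ε * φt * ℋ 2)
    (hN : ℋ 0 - φ₂ * ℋ 1 - φ₃ * ℋ 2 = 0) :
    (crossProduct ![1, -φ₂, -φ₃] ℰ) 0 = ε * φt * ℋ 0 := by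
  simp [crossProduct] at *
  linear_combination φ₂ * h2 + φ₃ * h3 - ε * φt * hN
end

section
/- Let Ψ₁, Ψ₂, Ψ₃, Ψ_t, ε ∈ ℝ with 1+Ψ₁ ≠ 0 and ε²Ψ_t² ≠ 1. Let η = [[1,-Ψ₂,-Ψ₃],[0,1+Ψ₁,0],[0,0,1+Ψ₁]], K = diag(η, η) (6×6), and let J be the 6×6 matrix with rows (1+Ψ₁,0,0,0,0,0), (Ψ₂,1,0,0,0,εΨ_t), (Ψ₃,0,1,0,-εΨ_t,0), (0,0,0,1+Ψ₁,0,0), (0,0,-εΨ_t,Ψ₂,1,0), (0,εΨ_t,0,Ψ₃,0,1). Then the matrix B₀ = K J⁻¹ is symmetric. -/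
set_option maxRecDepth 10000
set_option maxHeartbeats 2000000

open Matrix

@[simp] lemma cons_val_five' {α : Type*} (x : α) (u : Fin 5 → α) :
    Matrix.vecCons x u 5 = u 4 :=
  rfl

/-- The matrix `B₀ = K J⁻¹` is symmetric. -/
theorem stmt19 (Ψ₁ Ψ₂ Ψ₃ Ψt ε : ℝ) (h1 : 1+Ψ₁ ≠ 0) (h2 : ε^2*Ψt^2 ≠ 1) :
    let K : Matrix (Fin 6) (Fin 6) ℝ :=
      !![1, -Ψ₂, -Ψ₃, 0, 0, 0;
         0, 1+Ψ₁, 0, 0, 0, 0;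
         0, 0, 1+Ψ₁, 0, 0, 0;
         0, 0, 0, 1, -Ψ₂, -Ψ₃;
         0, 0, 0, 0, 1+Ψ₁, 0;
         0, 0, 0, 0, 0, 1+Ψ₁]
    let J : Matrix (Fin 6) (Fin 6) ℝ :=
      !![1+Ψ₁, 0, 0, 0, 0, 0;
         Ψ₂, 1, 0, 0, 0, ε*Ψt;
         Ψ₃, 0, 1, 0, -(ε*Ψt), 0;
         0, 0, 0, 1+Ψ₁, 0, 0;
         0, 0, -(ε*Ψt), Ψ₂, 1, 0;
         0, ε*Ψt, 0, Ψ₃, 0, 1]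
    (K * J⁻¹).IsSymm := by
  intro K J
  have hd : 1 - (ε*Ψt)^2 ≠ 0 := by
    intro h; apply h2; nlinarith [h]
  set a := 1 + Ψ₁ with ha
  set m := ε * Ψt with hm
  set d := 1 - (ε*Ψt)^2 with hdd
  have hJ : IsUnit J.det := by
    apply Matrix.isUnit_det_of_right_inverse (B :=
      !![1/a, 0, 0, 0, 0, 0;
         -Ψ₂/(a*d), 1/d, 0, m*Ψ₃/(a*d), 0, -m/d;
         -Ψ₃/(a*d), 0, 1/d, -(m*Ψ₂)/(a*d), m/d, 0;
         0, 0, 0, 1/a, 0, 0;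
         -(m*Ψ₃)/(a*d), 0, m/d, -Ψ₂/(a*d), 1/d, 0;
         m*Ψ₂/(a*d), -m/d, 0, -Ψ₃/(a*d), 0, 1/d])
    ext i j
    fin_cases i <;> fin_cases j <;>
      simp [J, Matrix.mul_apply, Fin.sum_univ_six, Matrix.one_apply, Matrix.transpose_apply] <;>
      field_simp <;> ring
  have hJT : IsUnit Jᵀ.det := by rwa [Matrix.det_transpose]
  have key : Kᵀ * J = Jᵀ * K := by
    ext i j
    fin_cases i <;> fin_cases j <;>
      simp [K, J, Matrix.mul_apply, Fin.sum_univ_six, Matrix.transpose_apply, Matrix.vecHead, Matrix.vecTail] <;> ring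
  rw [Matrix.IsSymm, Matrix.transpose_mul, Matrix.transpose_nonsing_inv]
  calc (Jᵀ)⁻¹ * Kᵀ = (Jᵀ)⁻¹ * (Kᵀ * (J * J⁻¹)) := by
        rw [Matrix.mul_nonsing_inv _ hJ, Matrix.mul_one]
    _ = (Jᵀ)⁻¹ * Jᵀ * (K * J⁻¹) := by
        rw [← Matrix.mul_assoc Kᵀ J, key]
        noncomm_ring
    _ = K * J⁻¹ := by rw [Matrix.nonsing_inv_mul _ hJT, Matrix.one_mul]
end
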